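/- arXiv:2501.16838 — 6 statements merged into one kernel-verified Lean document; each statement's English description precedes it below -/
import Mathlib

section
/- Let F be a finite field with q^k elements, let α ∈ F be a primitive element (a generator of the multiplicative group F*), and let C be an element of a field extension E of F with |E| = q^{kt} such that the multiplicative order of C is r = (q^{kt} − 1)/(q^k − 1), where gcd(t, q^k − 1) = 1. If C^{a−b} = α^{a−b} for integers a, b with 1 ≤ a, b ≤ q^{kt} − 1 and a ≠ b, then one reaches a contradiction; i.e., C^{a−b} = α^{a−b}·1 implies (q^{kt} − 1) divides a − b. -/
theorem power_eq_forces_divisibility (q k t : ℕ) (hq : 2 ≤ q) (hk : 1 ≤ k) (ht : 1 ≤ t)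
    (ht' : Nat.Coprime t (q ^ k - 1))
    (E : Type*) [Field E] [Fintype E] (hE : Fintype.card E = q ^ (k * t))
    (α C : E)
    (hα : orderOf α = q ^ k - 1)
    (hC : orderOf C = (q ^ (k * t) - 1) / (q ^ k - 1))
    (a b : ℕ) (ha : 1 ≤ a) (ha' : a ≤ q ^ (k * t) - 1) (hb : 1 ≤ b) (hb' : b ≤ q ^ (k * t) - 1)
    (hab : a ≠ b)
    (h : C ^ ((a : ℤ) - (b : ℤ)) = α ^ ((a : ℤ) - (b : ℤ))) :
    ((q ^ (k * t) - 1 : ℕ) : ℤ) ∣ (a : ℤ) - (b : ℤ) := by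
  set n := q ^ k - 1 with hn_def
  set m := q ^ (k * t) - 1 with hm_def
  have hqk : 1 < q ^ k := Nat.one_lt_pow (by omega) (by omega)
  have hn : 0 < n := by omega
  have hpow : q ^ (k * t) = (q ^ k) ^ t := by rw [pow_mul]
  have hqkt : 1 < q ^ (k * t) := Nat.one_lt_pow (by positivity) (by omega)
  have hdvd : n ∣ m := by
    have := Nat.sub_dvd_pow_sub_pow (q ^ k) 1 t
    simpa [hm_def, hn_def, hpow] using this
  have hnm : n ≤ m := by
    have h1 : q ^ k ≤ q ^ (k * t) := Nat.pow_le_pow_right (by omega) (by nlinarith)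
    omega
  -- geometric sum identity in ℕ
  have hs : (∑ i ∈ Finset.range t, (q ^ k) ^ i) * n = m := by
    have h1 : (1 : ℕ) ≤ q ^ (k * t) := hqkt.le
    have : (((∑ i ∈ Finset.range t, (q ^ k) ^ i) * n : ℕ) : ℤ) = ((m : ℕ) : ℤ) := by
      rw [hn_def, hm_def, hpow]
      push_cast [Nat.cast_sub hqk.le, Nat.cast_sub (hpow ▸ h1)]
      exact geom_sum_mul _ t
    exact_mod_cast this
  have hr : m / n = ∑ i ∈ Finset.range t, (q ^ k) ^ i :=
    Nat.div_eq_of_eq_mul_left hn hs.symm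
  -- r ≡ t [MOD n]
  have hq1 : (q ^ k) ≡ 1 [MOD n] := ((Nat.modEq_iff_dvd' hqk.le).mpr dvd_rfl).symm
  have hsum : ∀ s : ℕ, (∑ i ∈ Finset.range s, (q ^ k) ^ i) ≡ s [MOD n] := by
    intro s
    induction s with
    | zero => simpa using Nat.ModEq.refl 0
    | succ s ih =>
      rw [Finset.sum_range_succ]
      have := ih.add (hq1.pow s)
      simpa using this
  -- coprimality of r and n
  have hcop : Nat.Coprime (m / n) n := by
    have h1 : Nat.gcd n (m / n) = Nat.gcd n t := by
      rw [Nat.gcd_rec n (m / n), Nat.gcd_rec n t, (hr ▸ hsum t : m / n ≡ t [MOD n])]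
    have h2 : Nat.gcd n t = 1 := Nat.Coprime.gcd_eq_one (Nat.coprime_comm.mp ht')
    exact Nat.coprime_comm.mp (by rw [Nat.Coprime, h1, h2])
  have hrpos : 0 < m / n := Nat.div_pos hnm hn
  have hα0 : α ≠ 0 := by
    intro h0
    have h1 := pow_orderOf_eq_one α
    rw [hα, h0, zero_pow (by omega : n ≠ 0)] at h1
    exact zero_ne_one h1
  have hC0 : C ≠ 0 := by
    intro h0
    have h1 := pow_orderOf_eq_one C
    rw [hC, h0, zero_pow (by omega : m / n ≠ 0)] at h1
    exact zero_ne_one h1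
  set uC : Eˣ := Units.mk0 C hC0 with huC
  set uα : Eˣ := Units.mk0 α hα0 with huα
  have hoC : orderOf uC = m / n := by rw [← orderOf_units, huC, Units.val_mk0]; exact hC
  have hoα : orderOf uα = n := by rw [← orderOf_units, huα, Units.val_mk0]; exact hα
  have horder : orderOf (uC * uα⁻¹) = m := by
    rw [(Commute.all uC uα⁻¹).orderOf_mul_eq_mul_orderOf_of_coprime
      (by rw [hoC, orderOf_inv, hoα]; exact hcop), hoC, orderOf_inv, hoα]
    exact Nat.div_mul_cancel hdvd
  have h1 : (uC * uα⁻¹) ^ ((a : ℤ) - (b : ℤ)) = 1 := by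
    apply Units.ext
    rw [Units.val_zpow_eq_zpow_val, Units.val_mul, Units.val_one, Units.val_inv_eq_inv_val,
      huC, huα, Units.val_mk0, Units.val_mk0, mul_zpow, inv_zpow, ← inv_zpow, inv_zpow',
      zpow_neg, h, mul_inv_cancel₀]
    exact zpow_ne_zero _ hα0
  have h2 := orderOf_dvd_iff_zpow_eq_one.mpr h1
  rwa [horder] at h2
end

section
/- Let F = F_{q^k} be a finite field, α a primitive element of F, and C an element of the field F_{q^{kt}} of multiplicative order r = (q^{kt}−1)/(q^k−1), with gcd(r, q^k − 1) = 1. For integers a, b ∈ {1, …, q^{kt}−1} define D_{a,b} = ∑_{j=1}^{a} α^{j−1} C^{a+b−j} − ∑_{j=1}^{b} α^{j−1} C^{a+b−j} (an element of F_{q^{kt}}). Then D_{a,b} = 0 if and only if a = b. -/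
/-!
For `b < a` and `n = a - b`, `D a b = (α C)^b · ∑_{i<n} α^i C^(n-1-i)`, and the homogeneous
geometric sum times `α - C` is `α^n - C^n`. So `D a b = 0` forces `(α / C)^n = 1`. Since the
orders of `α` and `C` are coprime, `α / C` has order `r (q^k - 1) = q^(kt) - 1 > n`.
-/

open Finset

theorem sum_Icc_sub_sum_Icc_eq_geom_sum₂ {R : Type*} [CommRing R] (α C : R) {a b : ℕ}
    (hba : b ≤ a) :
    (∑ j ∈ Icc 1 a, α ^ (j - 1) * C ^ (a + b - j)) - ∑ j ∈ Icc 1 b, α ^ (j - 1) * C ^ (a + b - j)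
      = (α * C) ^ b * ∑ i ∈ range (a - b), α ^ i * C ^ (a - b - 1 - i) := by
  have hIcc (n : ℕ) : Icc 1 n = Ioc 0 n := Icc_add_one_left_eq_Ioc 0 n
  rw [hIcc, hIcc, ← sum_Ioc_consecutive _ (Nat.zero_le b) hba, add_sub_cancel_left,
    ← Ico_add_one_add_one_eq_Ioc, sum_Ico_eq_sum_range, add_tsub_add_eq_tsub_right, mul_sum]
  refine sum_congr rfl fun i hi => ?_
  have hi : i < a - b := mem_range.mp hi
  rw [show b + 1 + i - 1 = b + i by omega, show a + b - (b + 1 + i) = b + (a - b - 1 - i) by omega]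
  ring

theorem orderOf_inv₀ {G₀ : Type*} [GroupWithZero G₀] (x : G₀) : orderOf x⁻¹ = orderOf x := by
  simp [orderOf_eq_orderOf_iff, inv_pow, inv_eq_one]

theorem orderOf_div_of_coprime {G₀ : Type*} [CommGroupWithZero G₀] {x y : G₀}
    (h : (orderOf x).Coprime (orderOf y)) : orderOf (x / y) = orderOf x * orderOf y := by
  rw [div_eq_mul_inv, (Commute.all _ _).orderOf_mul_eq_mul_orderOf_of_coprime
    (by rwa [orderOf_inv₀]), orderOf_inv₀]

theorem sum_Icc_sub_sum_Icc_ne_zero {E : Type*} [Field E] {α C : E} {a b : ℕ} (hba : b < a)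
    (hab : a - b < orderOf (α / C)) :
    (∑ j ∈ Icc 1 a, α ^ (j - 1) * C ^ (a + b - j)) - ∑ j ∈ Icc 1 b, α ^ (j - 1) * C ^ (a + b - j)
      ≠ 0 := by
  have hαC : α / C ≠ 0 := by
    rintro h
    rw [h, orderOf_zero] at hab
    omega
  obtain ⟨hα, hC⟩ := div_ne_zero_iff.mp hαC
  have hpow : α ^ (a - b) ≠ C ^ (a - b) := fun h =>
    pow_ne_one_of_lt_orderOf (by omega) hab (by rw [div_pow, h, div_self (pow_ne_zero _ hC)])
  rw [sum_Icc_sub_sum_Icc_eq_geom_sum₂ α C hba.le]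
  refine mul_ne_zero (pow_ne_zero _ (mul_ne_zero hα hC)) fun hsum => hpow ?_
  rw [← sub_eq_zero, ← geom_sum₂_mul, hsum, zero_mul]

theorem D_ab_eq_zero_iff_general (q k t : ℕ)
    (E : Type*) [Field E]
    (α C : E)
    (hα : orderOf α = q ^ k - 1)
    (hC : orderOf C = (q ^ (k * t) - 1) / (q ^ k - 1))
    (hcop : Nat.Coprime ((q ^ (k * t) - 1) / (q ^ k - 1)) (q ^ k - 1))
    (hr : ((q ^ (k * t) - 1) / (q ^ k - 1)) * (q ^ k - 1) = q ^ (k * t) - 1)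
    (D : ℕ → ℕ → E)
    (hD : ∀ a b, D a b = (∑ j ∈ Finset.Icc 1 a, α ^ (j - 1) * C ^ (a + b - j))
        - (∑ j ∈ Finset.Icc 1 b, α ^ (j - 1) * C ^ (a + b - j)))
    (a b : ℕ) (ha : a ∈ Finset.Icc 1 (q ^ (k * t) - 1)) (hb : b ∈ Finset.Icc 1 (q ^ (k * t) - 1)) :
    D a b = 0 ↔ a = b := by
  have hord : orderOf (α / C) = q ^ (k * t) - 1 := by
    rw [orderOf_div_of_coprime (by rw [hα, hC]; exact hcop.symm), hα, hC, mul_comm, hr]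
  have hne {a b : ℕ} (hba : b < a) (hb : 1 ≤ b) (ha : a ≤ q ^ (k * t) - 1) : D a b ≠ 0 :=
    hD a b ▸ sum_Icc_sub_sum_Icc_ne_zero hba (by omega)
  rw [mem_Icc] at ha hb
  refine ⟨fun h0 => ?_, fun hab => by rw [hD, hab, sub_self]⟩
  rcases lt_trichotomy a b with hab | hab | hab
  · have hswap : D a b = -D b a := by rw [hD, hD, add_comm a b, neg_sub]
    exact absurd (neg_eq_zero.mp (hswap ▸ h0)) (hne hab ha.1 hb.2)
  · exact hab
  · exact absurd h0 (hne hab hb.1 ha.2)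

theorem D_ab_eq_zero_iff (q k t : ℕ) (hq : 2 ≤ q) (hk : 1 ≤ k) (ht : 1 ≤ t)
    (E : Type*) [Field E]
    (α C : E)
    (hα : orderOf α = q ^ k - 1)
    (hC : orderOf C = (q ^ (k * t) - 1) / (q ^ k - 1))
    (hcop : Nat.Coprime ((q ^ (k * t) - 1) / (q ^ k - 1)) (q ^ k - 1))
    (hr : ((q ^ (k * t) - 1) / (q ^ k - 1)) * (q ^ k - 1) = q ^ (k * t) - 1)
    (D : ℕ → ℕ → E)
    (hD : ∀ a b, D a b = (∑ j ∈ Finset.Icc 1 a, α ^ (j - 1) * C ^ (a + b - j))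
        - (∑ j ∈ Finset.Icc 1 b, α ^ (j - 1) * C ^ (a + b - j)))
    (a b : ℕ) (ha : a ∈ Finset.Icc 1 (q ^ (k * t) - 1)) (hb : b ∈ Finset.Icc 1 (q ^ (k * t) - 1)) :
    D a b = 0 ↔ a = b :=
  D_ab_eq_zero_iff_general q k t E α C hα hC hcop hr D hD a b ha hb
end

section
/- With the setup of the previous statement, define also h₂ = [[αI_t, −I_t],[0, C]] ∈ GL_{2t}(F). Then the cyclic subgroups satisfy ⟨h₁⟩ ∩ ⟨h₂⟩ = {I_{2t}}, and hence H = ⟨h₁, h₂⟩ is an Abelian non-cyclic group of order (q^{kt} − 1)². -/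
theorem H_abelian_noncyclic (q k t : ℕ) (hq : 2 ≤ q) (hk : 1 ≤ k) (ht : 1 ≤ t)
    (F : Type*) [Field F] [Fintype F] (hF : Fintype.card F = q ^ k)
    (α : F) (hα : orderOf α = q ^ k - 1)
    (C : Matrix (Fin t) (Fin t) F)
    (hC : orderOf C = (q ^ (k * t) - 1) / (q ^ k - 1))
    (hcop : Nat.Coprime ((q ^ (k * t) - 1) / (q ^ k - 1)) (q ^ k - 1))
    (hrr : ((q ^ (k * t) - 1) / (q ^ k - 1)) * (q ^ k - 1) = q ^ (k * t) - 1)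
    (hfield : ∀ A ∈ Algebra.adjoin F {C}, A = 0 ∨ IsUnit A)
    (h₁ h₂ : Matrix (Fin t ⊕ Fin t) (Fin t ⊕ Fin t) F)
    (hh₁ : h₁ = Matrix.fromBlocks C 1 0 (α • 1))
    (hh₂ : h₂ = Matrix.fromBlocks (α • 1) (-1) 0 C)
    (ho₁ : orderOf h₁ = q ^ (k * t) - 1) (ho₂ : orderOf h₂ = q ^ (k * t) - 1) :
    (Submonoid.powers h₁ ⊓ Submonoid.powers h₂ = ⊥) ∧
    (∀ x ∈ Submonoid.closure {h₁, h₂}, ∀ y ∈ Submonoid.closure {h₁, h₂}, x * y = y * x) ∧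
    (Nat.card (Submonoid.closure {h₁, h₂}) = (q ^ (k * t) - 1) ^ 2) ∧
    (¬ ∃ g : Matrix (Fin t ⊕ Fin t) (Fin t ⊕ Fin t) F,
        Submonoid.closure {h₁, h₂} = Submonoid.powers g) := by
  classical
  haveI : Nonempty (Fin t) := ⟨⟨0, ht⟩⟩
  set N := q ^ (k * t) - 1 with hNdef
  set r := N / (q ^ k - 1) with hrdef
  -- N ≥ 1
  have hktne : k * t ≠ 0 := by positivity
  have hqN : 2 ≤ q ^ (k * t) := le_trans hq (Nat.le_self_pow hktne q)
  have hN1 : 1 ≤ N := by omega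
  -- N ≥ 2 (otherwise the hypotheses are contradictory)
  have hN2 : 2 ≤ N := by
    by_contra h
    have hNeq : N = 1 := by omega
    have h1 : h₁ = 1 := orderOf_eq_one_iff.mp (by rw [ho₁, hNeq])
    have hone : (1 : Matrix (Fin t ⊕ Fin t) (Fin t ⊕ Fin t) F) =
        Matrix.fromBlocks C 1 0 (α • 1) := by rw [← hh₁, h1]
    have := congrFun (congrFun hone (Sum.inl ⟨0, ht⟩)) (Sum.inr ⟨0, ht⟩)
    simp [Matrix.one_apply] at this
  -- commuting generators
  have hcomm : h₁ * h₂ = h₂ * h₁ := by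
    rw [hh₁, hh₂]
    simp [Matrix.fromBlocks_multiply, Matrix.mul_smul, Matrix.smul_mul, mul_neg, neg_mul]
  have cm : Commute h₁ h₂ := hcomm
  -- block structure of powers
  have pb1 : ∀ n : ℕ, ∃ B, h₁ ^ n = Matrix.fromBlocks (C ^ n) B 0 ((α ^ n) • 1) := by
    intro n
    induction n with
    | zero => exact ⟨0, by simp [← Matrix.fromBlocks_one]⟩
    | succ n ih =>
      obtain ⟨B, hB⟩ := ih
      refine ⟨C ^ n * 1 + B * (α • 1), ?_⟩
      rw [pow_succ, hB, hh₁, Matrix.fromBlocks_multiply]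
      refine Matrix.fromBlocks_inj.mpr ⟨?_, rfl, ?_, ?_⟩
      · simp [pow_succ]
      · simp
      · simp [Matrix.mul_smul, Matrix.smul_mul, smul_smul, pow_succ, mul_comm]
  have pb2 : ∀ n : ℕ, ∃ B, h₂ ^ n = Matrix.fromBlocks ((α ^ n) • 1) B 0 (C ^ n) := by
    intro n
    induction n with
    | zero => exact ⟨0, by simp [← Matrix.fromBlocks_one]⟩
    | succ n ih =>
      obtain ⟨B, hB⟩ := ih
      refine ⟨(α ^ n • 1) * (-1) + B * C, ?_⟩
      rw [pow_succ, hB, hh₂, Matrix.fromBlocks_multiply]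
      refine Matrix.fromBlocks_inj.mpr ⟨?_, rfl, ?_, ?_⟩
      · simp [Matrix.mul_smul, Matrix.smul_mul, smul_smul, pow_succ, mul_comm]
      · simp
      · simp [pow_succ]
  -- scalar matrices
  have scal_eq : ∀ x : F, x • (1 : Matrix (Fin t) (Fin t) F) = Matrix.scalar (Fin t) x := by
    intro x
    ext i j
    by_cases h : i = j <;>
      simp [Matrix.scalar_apply, Matrix.smul_apply, Matrix.one_apply, Matrix.diagonal_apply, h]
  have hscord : ∀ x : F, orderOf (x • (1 : Matrix (Fin t) (Fin t) F)) = orderOf x := by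
    intro x
    rw [scal_eq]
    exact orderOf_injective (Matrix.scalar (Fin t)).toMonoidHom
      (fun a b hab => Matrix.scalar_inj.mp hab) x
  -- key: a common value of powers of h₁ and h₂ is 1
  have key : ∀ a b : ℕ, h₁ ^ a = h₂ ^ b → h₁ ^ a = 1 := by
    intro a b hab
    obtain ⟨B₁, e₁⟩ := pb1 a
    obtain ⟨B₂, e₂⟩ := pb2 b
    rw [e₁, e₂] at hab
    obtain ⟨hA, -, -, hD⟩ := Matrix.fromBlocks_inj.mp hab
    have o1 : orderOf (C ^ a) = 1 := by
      have d1 : orderOf (C ^ a) ∣ r := by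
        have := orderOf_pow_dvd (x := C) a; rwa [hC] at this
      have d2 : orderOf (C ^ a) ∣ (q ^ k - 1) := by
        rw [hA, hscord]
        have := orderOf_pow_dvd (x := α) b; rwa [hα] at this
      have := Nat.dvd_gcd d1 d2
      rwa [hcop.gcd_eq_one, Nat.dvd_one] at this
    have o2 : orderOf (C ^ b) = 1 := by
      have d1 : orderOf (C ^ b) ∣ r := by
        have := orderOf_pow_dvd (x := C) b; rwa [hC] at this
      have d2 : orderOf (C ^ b) ∣ (q ^ k - 1) := by
        rw [← hD, hscord]
        have := orderOf_pow_dvd (x := α) a; rwa [hα] at this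
      have := Nat.dvd_gcd d1 d2
      rwa [hcop.gcd_eq_one, Nat.dvd_one] at this
    have hCa : C ^ a = 1 := orderOf_eq_one_iff.mp o1
    have hCb : C ^ b = 1 := orderOf_eq_one_iff.mp o2
    have hαa : α ^ a = 1 := by
      have : Matrix.scalar (Fin t) (α ^ a) = Matrix.scalar (Fin t) 1 := by
        rw [← scal_eq, hD, hCb, map_one]
      exact Matrix.scalar_inj.mp this
    have hra : r ∣ a := by
      rw [← hC]; exact orderOf_dvd_iff_pow_eq_one.mpr hCa
    have hsa : (q ^ k - 1) ∣ a := by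
      rw [← hα]; exact orderOf_dvd_iff_pow_eq_one.mpr hαa
    have hNa : N ∣ a := by
      rw [← hrr]; exact Nat.Coprime.mul_dvd_of_dvd_of_dvd hcop hra hsa
    rw [← ho₁] at hNa
    exact orderOf_dvd_iff_pow_eq_one.mp hNa
  -- Part 1: trivial intersection
  have part1 : Submonoid.powers h₁ ⊓ Submonoid.powers h₂ = ⊥ := by
    apply le_antisymm
    · rintro x ⟨⟨a, ha⟩, ⟨b, hb⟩⟩
      have ha' : h₁ ^ a = x := ha
      have hb' : h₂ ^ b = x := hb
      have h1 := key a b (ha'.trans hb'.symm)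
      simp only [Submonoid.mem_bot]
      rw [← ha', h1]
    · exact bot_le
  -- representation of closure elements
  have mem1 : h₁ ∈ Submonoid.closure ({h₁, h₂} : Set _) :=
    Submonoid.subset_closure (by simp)
  have mem2 : h₂ ∈ Submonoid.closure ({h₁, h₂} : Set _) :=
    Submonoid.subset_closure (by simp)
  have hmulrep : ∀ a b c d : ℕ,
      (h₁ ^ a * h₂ ^ b) * (h₁ ^ c * h₂ ^ d) = h₁ ^ (a + c) * h₂ ^ (b + d) := by
    intro a b c d
    rw [(cm.symm.pow_pow b c).mul_mul_mul_comm, ← pow_add, ← pow_add]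
  have hrep : ∀ x ∈ Submonoid.closure ({h₁, h₂} : Set _), ∃ a b : ℕ, x = h₁ ^ a * h₂ ^ b := by
    intro x hx
    induction hx using Submonoid.closure_induction with
    | mem y hy =>
      rcases hy with h | h
      · exact ⟨1, 0, by rw [h]; simp⟩
      · exact ⟨0, 1, by rw [h]; simp⟩
    | one => exact ⟨0, 0, by simp⟩
    | mul y z hy hz ihy ihz =>
      obtain ⟨a, b, rfl⟩ := ihy
      obtain ⟨c, d, rfl⟩ := ihz
      exact ⟨a + c, b + d, hmulrep a b c d⟩
  -- Part 2: commutativity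
  have part2 : ∀ x ∈ Submonoid.closure ({h₁, h₂} : Set _),
      ∀ y ∈ Submonoid.closure ({h₁, h₂} : Set _), x * y = y * x := by
    intro x hx y hy
    obtain ⟨a, b, rfl⟩ := hrep x hx
    obtain ⟨c, d, rfl⟩ := hrep y hy
    rw [hmulrep, hmulrep, Nat.add_comm a c, Nat.add_comm b d]
  -- powers of the generators of order N
  have hN1' : h₁ ^ N = 1 := by rw [← ho₁]; exact pow_orderOf_eq_one h₁
  have hN2' : h₂ ^ N = 1 := by rw [← ho₂]; exact pow_orderOf_eq_one h₂
  -- cancellation helper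
  have cancel : ∀ x y : ℕ, x < N → y < N → N ∣ (N - x + y) → y = x := by
    rintro x y hx hy ⟨e, he⟩
    have h1 : 1 ≤ N - x + y := by omega
    have h2 : N - x + y < 2 * N := by omega
    have he0 : e ≠ 0 := by rintro rfl; omega
    have he2 : e < 2 := by
      by_contra hge
      push_neg at hge
      have h3 : N * 2 ≤ N * e := Nat.mul_le_mul_left N hge
      omega
    have he1 : e = 1 := by omega
    subst he1
    omega
  -- injectivity
  have hinj : ∀ a b c d : ℕ, a < N → b < N → c < N → d < N →
      h₁ ^ a * h₂ ^ b = h₁ ^ c * h₂ ^ d → a = c ∧ b = d := by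
    intro a b c d ha hb hc hd heq
    have e2 : h₁ ^ (N - c) * h₂ ^ (N - b) * (h₁ ^ a * h₂ ^ b)
        = h₁ ^ (N - c) * h₂ ^ (N - b) * (h₁ ^ c * h₂ ^ d) := by rw [heq]
    rw [hmulrep, hmulrep] at e2
    rw [show N - b + b = N by omega, show N - c + c = N by omega, hN1', hN2',
      mul_one, one_mul] at e2
    have hx1 := key _ _ e2
    have hx2 : h₂ ^ (N - b + d) = 1 := e2.symm.trans hx1
    have d1 : N ∣ (N - c + a) := by
      have := orderOf_dvd_iff_pow_eq_one.mpr hx1; rwa [ho₁] at this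
    have d2 : N ∣ (N - b + d) := by
      have := orderOf_dvd_iff_pow_eq_one.mpr hx2; rwa [ho₂] at this
    exact ⟨cancel c a hc ha d1, (cancel b d hb hd d2).symm⟩
  -- Part 3: cardinality
  have hmod1 : ∀ a : ℕ, h₁ ^ (a % N) = h₁ ^ a := by
    intro a; rw [← ho₁]; exact pow_mod_orderOf h₁ a
  have hmod2 : ∀ a : ℕ, h₂ ^ (a % N) = h₂ ^ a := by
    intro a; rw [← ho₂]; exact pow_mod_orderOf h₂ a
  set f : ℕ × ℕ → Matrix (Fin t ⊕ Fin t) (Fin t ⊕ Fin t) F :=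
    fun p => h₁ ^ p.1 * h₂ ^ p.2 with hf
  set fs := (Finset.Iio N ×ˢ Finset.Iio N).image f with hfs
  have hset : (Submonoid.closure ({h₁, h₂} : Set _) : Set _)
      = (fs : Set (Matrix (Fin t ⊕ Fin t) (Fin t ⊕ Fin t) F)) := by
    ext x
    simp only [hfs, Finset.coe_image, Set.mem_image, Finset.mem_coe, SetLike.mem_coe]
    constructor
    · intro hx
      obtain ⟨a, b, rfl⟩ := hrep x hx
      refine ⟨(a % N, b % N), ?_, ?_⟩
      · simp only [Finset.mem_product, Finset.mem_Iio]
        exact ⟨Nat.mod_lt _ (by omega), Nat.mod_lt _ (by omega)⟩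
      · show h₁ ^ (a % N) * h₂ ^ (b % N) = _
        rw [hmod1, hmod2]
    · rintro ⟨⟨a, b⟩, -, rfl⟩
      exact mul_mem (pow_mem mem1 a) (pow_mem mem2 b)
  have hcardfs : fs.card = N * N := by
    rw [hfs, Finset.card_image_of_injOn, Finset.card_product, Nat.card_Iio]
    rintro ⟨a, b⟩ ha ⟨c, d⟩ hc hfeq
    simp only [Finset.coe_product, Set.mem_prod, Finset.mem_coe, Finset.mem_Iio] at ha hc
    obtain ⟨h1, h2⟩ := hinj a b c d ha.1 ha.2 hc.1 hc.2 hfeq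
    simp [h1, h2]
  have part3 : Nat.card (Submonoid.closure ({h₁, h₂} : Set _)) = N ^ 2 := by
    rw [← SetLike.coe_sort_coe, hset, Nat.card_coe_set_eq, Set.ncard_coe_finset, hcardfs, sq]
  -- Part 4: not cyclic
  have part4 : ¬ ∃ g : Matrix (Fin t ⊕ Fin t) (Fin t ⊕ Fin t) F,
      Submonoid.closure ({h₁, h₂} : Set _) = Submonoid.powers g := by
    rintro ⟨g, hg⟩
    have hgmem : g ∈ Submonoid.closure ({h₁, h₂} : Set _) := hg ▸ Submonoid.mem_powers g
    obtain ⟨a, b, hgab⟩ := hrep g hgmem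
    have hgN : g ^ N = 1 := by
      rw [hgab, (cm.pow_pow a b).mul_pow, pow_right_comm h₁ a N, pow_right_comm h₂ b N,
        hN1', hN2', one_pow, one_pow, one_mul]
    have hsub : (Submonoid.powers g : Set _)
        ⊆ (((Finset.Iio N).image (g ^ ·) : Finset _) :
            Set (Matrix (Fin t ⊕ Fin t) (Fin t ⊕ Fin t) F)) := by
      rintro x ⟨m, rfl⟩
      simp only [Finset.coe_image, Set.mem_image, Finset.mem_coe, Finset.mem_Iio]
      refine ⟨m % N, Nat.mod_lt _ (by omega), ?_⟩
      show g ^ (m % N) = g ^ m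
      conv_rhs => rw [← Nat.div_add_mod m N]
      rw [pow_add, pow_mul, hgN, one_pow, one_mul]
    have hle : Nat.card (Submonoid.powers g) ≤ N := by
      have e1 : Nat.card (Submonoid.powers g) = (Submonoid.powers g : Set (Matrix (Fin t ⊕ Fin t) (Fin t ⊕ Fin t) F)).ncard := by
        rw [← SetLike.coe_sort_coe, Nat.card_coe_set_eq]
      have e2 := Set.ncard_le_ncard hsub (Finset.finite_toSet _)
      rw [Set.ncard_coe_finset] at e2
      have e3 : ((Finset.Iio N).image (g ^ ·)).card ≤ N := by
        refine Finset.card_image_le.trans ?_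
        rw [Nat.card_Iio]
      omega
    rw [hg] at part3
    have hcontra : N ^ 2 ≤ N := by rw [← part3]; exact hle
    have h2N : 2 * N ≤ N * N := Nat.mul_le_mul_right N hN2
    rw [sq] at hcontra
    omega
  exact ⟨part1, part2, part3, part4⟩
end

section
/- With H = ⟨h₁, h₂⟩, N = ⟨(h₁h₂)^r⟩ = ⟨αI_{2t}⟩, and T = ⟨h₁⟩⟨h₂^{q^k−1}⟩ as above, one has N ∩ T = {I_{2t}} and H = NT. -/
/-!
Since `h₁ h₂ = α • fromBlocks C 0 0 C` and `C ^ r = 1`, the group `N` consists of scalar matrices,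
so it is central. Every element of `T` is block upper triangular with upper-left block a power
`C ^ a` of `C` (the upper-left block of `h₂ ^ (q ^ k - 1)` is `α ^ (q ^ k - 1) = 1`). If such an
element is a scalar `c • 1` of `N`, then `C ^ a = c • 1` and `c ^ (q ^ k - 1) = 1`; as
`gcd (r, q ^ k - 1) = 1` this forces `C ^ a = 1`, hence `c = 1`.

As `N` is central it suffices for `H = N T` to place the generators in `N T`. For `h₂`, pick
`r m = 1 + (q ^ k - 1) s`: then `(h₁ h₂) ^ (r m) = h₁ ^ (r m) * h₂ * (h₂ ^ (q ^ k - 1)) ^ s`, and the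
inverse powers of `h₁` and `h₂ ^ (q ^ k - 1)` needed to isolate `h₂` are positive powers, because
invertible matrices over a finite field have finite order.
-/

open Matrix Submonoid
open scoped Pointwise

theorem Nat.Coprime.exists_mul_eq_one_add_mul {r n : ℕ} (h : r.Coprime n) (hr : 0 < r) :
    ∃ m s, r * m = 1 + n * s := by
  rcases n.eq_zero_or_pos with rfl | hn
  · exact ⟨1, 0, by simpa using Nat.coprime_zero_right r |>.mp h⟩
  obtain ⟨s, hs⟩ := (Nat.modEq_iff_dvd' (Nat.one_le_pow _ _ hr)).mp (Nat.ModEq.pow_totient h).symm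
  obtain ⟨e, he⟩ := Nat.exists_eq_add_one.mpr (Nat.totient_pos.mpr hn)
  rw [he, pow_succ'] at hs
  have : 0 < r * r ^ e := by positivity
  exact ⟨r ^ e, s, by omega⟩

section Monoid

variable {M : Type*} [Monoid M]

theorem pow_eq_one_of_coprime_orderOf {x : M} {a n : ℕ} (h : (orderOf x).Coprime n)
    (hx : (x ^ a) ^ n = 1) : x ^ a = 1 :=
  orderOf_eq_one_iff.mp <| Nat.Coprime.eq_one_of_dvd
    (Nat.Coprime.coprime_dvd_left (orderOf_pow_dvd a) h) (orderOf_dvd_of_pow_eq_one hx)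

/-- `x ^ i` and `(y ^ n) ^ j` stand for `x ^ (-r * m)` and `y ^ (-n * s)`. -/
theorem Commute.exists_eq_pow_mul_pow_mul_pow {x y : M} (hxy : Commute x y)
    (hx : IsOfFinOrder x) (hy : IsOfFinOrder y) {r n m s : ℕ} (h : r * m = 1 + n * s) :
    ∃ i j : ℕ, y = ((x * y) ^ r) ^ m * (x ^ i * (y ^ n) ^ j) := by
  obtain ⟨a, ha⟩ := Nat.exists_eq_add_one.mpr hx.orderOf_pos
  obtain ⟨b, hb⟩ := Nat.exists_eq_add_one.mpr hy.orderOf_pos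
  refine ⟨r * m * a, s * b, ?_⟩
  have hx1 : r * m + r * m * a = orderOf x * (r * m) := by rw [ha]; ring
  have hy1 : r * m + n * (s * b) = 1 + orderOf y * (n * s) := by rw [hb, h]; ring
  rw [← pow_mul, ← pow_mul, hxy.mul_pow, mul_assoc, ← mul_assoc (y ^ _),
    ← (hxy.pow_pow _ _).eq, mul_assoc, ← mul_assoc, ← pow_add, ← pow_add, hx1, hy1, pow_mul,
    pow_orderOf_eq_one, one_pow, one_mul, pow_add, pow_mul, pow_orderOf_eq_one, one_pow, mul_one,
    pow_one]

theorem Submonoid.closure_subset_mul_of_forall_commute {N T : Submonoid M}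
    (hN : ∀ a ∈ N, ∀ b, Commute a b) {s : Set M} (hs : s ⊆ (N : Set M) * T) :
    (closure s : Set M) ⊆ (N : Set M) * T := by
  intro x hx
  induction hx using closure_induction with
  | mem x hx => exact hs hx
  | one => exact ⟨1, one_mem N, 1, one_mem T, one_mul 1⟩
  | mul x y _ _ hx hy =>
    obtain ⟨a, ha, b, hb, rfl⟩ := hx
    obtain ⟨a', ha', b', hb', rfl⟩ := hy
    refine ⟨a * a', mul_mem ha ha', b * b', mul_mem hb hb', ?_⟩
    beta_reduce
    rw [mul_assoc, ← mul_assoc a', (hN a' ha' b).eq]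
    simp only [mul_assoc]

theorem Commute.closure_pair_subset_powers_mul_closure {x y : M} (hxy : Commute x y)
    (hx : IsOfFinOrder x) (hy : IsOfFinOrder y) {r n : ℕ} (hrn : r.Coprime n) (hr : 0 < r)
    (hcentral : ∀ z, Commute ((x * y) ^ r) z) :
    (closure {x, y} : Set M) ⊆ (powers ((x * y) ^ r) : Set M) * closure {x, y ^ n} := by
  refine closure_subset_mul_of_forall_commute ?_ ?_
  · intro a ha z
    obtain ⟨i, rfl⟩ := (mem_powers_iff _ _).mp ha
    exact (hcentral z).pow_left i
  · rw [Set.insert_subset_iff, Set.singleton_subset_iff]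
    refine ⟨⟨1, one_mem _, x, subset_closure (by simp), one_mul x⟩, ?_⟩
    obtain ⟨m, s, hms⟩ := hrn.exists_mul_eq_one_add_mul hr
    obtain ⟨i, j, hij⟩ := hxy.exists_eq_pow_mul_pow_mul_pow hx hy hms
    exact ⟨_, pow_mem (mem_powers _) m, _,
      mul_mem (pow_mem (subset_closure (by simp)) i) (pow_mem (subset_closure (by simp)) j),
      hij.symm⟩

end Monoid

namespace Matrix

variable {m n R : Type*} [DecidableEq m] [DecidableEq n]

theorem smul_one_eq_fromBlocks [Semiring R] (c : R) :
    (c • 1 : Matrix (m ⊕ n) (m ⊕ n) R) = fromBlocks (c • 1) 0 0 (c • 1) := by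
  rw [← fromBlocks_one, fromBlocks_smul, smul_zero, smul_zero]

variable [Fintype m] [Fintype n]

theorem fromBlocks_zero₂₁_pow [Semiring R] (A : Matrix m m R) (B : Matrix m n R)
    (D : Matrix n n R) (k : ℕ) :
    ∃ B', fromBlocks A B 0 D ^ k = fromBlocks (A ^ k) B' 0 (D ^ k) := by
  induction k with
  | zero => exact ⟨0, by simp [fromBlocks_one]⟩
  | succ k ih =>
    obtain ⟨B', hB'⟩ := ih
    exact ⟨A ^ k * B + B' * D, by rw [pow_succ, hB', fromBlocks_multiply]; simp [pow_succ]⟩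

def blockUpperTriangularSubmonoid [Semiring R] (P : Submonoid (Matrix m m R)) :
    Submonoid (Matrix (m ⊕ n) (m ⊕ n) R) where
  carrier := {x | ∃ A ∈ P, ∃ B D, x = fromBlocks A B 0 D}
  mul_mem' := by
    rintro _ _ ⟨A, hA, B, D, rfl⟩ ⟨A', hA', B', D', rfl⟩
    exact ⟨A * A', mul_mem hA hA', A * B' + B * D', D * D', by simp [fromBlocks_multiply]⟩
  one_mem' := ⟨1, one_mem P, 0, 1, fromBlocks_one.symm⟩

theorem closure_pair_le_blockUpperTriangularSubmonoid [Semiring R] {C A : Matrix m m R} {e : ℕ}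
    (hA : A ^ e = 1) (B B' : Matrix m n R) (D D' : Matrix n n R) :
    closure {fromBlocks C B 0 D, fromBlocks A B' 0 D' ^ e} ≤
      blockUpperTriangularSubmonoid (powers C) := by
  obtain ⟨B'', hB''⟩ := fromBlocks_zero₂₁_pow A B' D' e
  rw [closure_le, Set.insert_subset_iff, Set.singleton_subset_iff, hB'', hA]
  exact ⟨⟨C, mem_powers C, B, D, rfl⟩, ⟨1, one_mem _, B'', D' ^ e, rfl⟩⟩

theorem eq_one_of_smul_one_mem_blockUpperTriangularSubmonoid [CommSemiring R] [Nonempty m]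
    {C : Matrix m m R} {c : R} {e : ℕ} (hC : (orderOf C).Coprime e) (hc : c ^ e = 1)
    (h : (c • 1 : Matrix (m ⊕ n) (m ⊕ n) R) ∈ blockUpperTriangularSubmonoid (powers C)) :
    c = 1 := by
  obtain ⟨A, hA, B, D, hcA⟩ := h
  obtain ⟨a, rfl⟩ := (mem_powers_iff _ _).mp hA
  rw [smul_one_eq_fromBlocks, fromBlocks_inj] at hcA
  have hCa : C ^ a = 1 := pow_eq_one_of_coprime_orderOf hC (by
    rw [← hcA.1, smul_pow, hc, one_pow, one_smul])
  simpa using congrFun₂ (hcA.1.trans hCa) (Classical.arbitrary m) (Classical.arbitrary m)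

variable [CommRing R] (C : Matrix n n R) (α : R)

theorem fromBlocks_one_mul_fromBlocks_neg_one :
    fromBlocks C 1 0 (α • 1) * fromBlocks (α • 1) (-1) 0 C = α • fromBlocks C 0 0 C := by
  simp [fromBlocks_multiply, fromBlocks_smul]

theorem commute_fromBlocks_one_fromBlocks_neg_one :
    Commute (fromBlocks C 1 0 (α • 1)) (fromBlocks (α • 1) (-1) 0 C) := by
  simp [Commute, SemiconjBy, fromBlocks_multiply]

end Matrix

theorem H_eq_N_mul_T_general (q k t r : ℕ) (hq : 2 ≤ q) (hk : 1 ≤ k) (ht : 1 ≤ t)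
    (hcop : Nat.Coprime r (q ^ k - 1)) (hrr : r * (q ^ k - 1) = q ^ (k * t) - 1)
    (F : Type*) [Field F] [Fintype F]
    (α : F) (hα : orderOf α = q ^ k - 1)
    (C : Matrix (Fin t) (Fin t) F) (hC : orderOf C = r)
    (h₁ h₂ : Matrix (Fin t ⊕ Fin t) (Fin t ⊕ Fin t) F)
    (hh₁ : h₁ = Matrix.fromBlocks C 1 0 (α • 1))
    (hh₂ : h₂ = Matrix.fromBlocks (α • 1) (-1) 0 C)
    (N T : Submonoid (Matrix (Fin t ⊕ Fin t) (Fin t ⊕ Fin t) F))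
    (hN : N = Submonoid.powers ((h₁ * h₂) ^ r))
    (hT : T = Submonoid.closure {h₁, h₂ ^ (q ^ k - 1)}) :
    (N ⊓ T = ⊥) ∧
    (∀ g ∈ Submonoid.closure {h₁, h₂}, ∃ n ∈ N, ∃ t ∈ T, g = n * t) := by
  subst hN hT
  set e := q ^ k - 1
  have : Nonempty (Fin t) := ⟨⟨0, ht⟩⟩
  have hre : 0 < r * e := by
    rw [hrr, tsub_pos_iff_lt]; exact Nat.one_lt_pow (by positivity) (by omega)
  have hα1 : α ^ e = 1 := hα ▸ pow_orderOf_eq_one α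
  have hαe (j : ℕ) : (α ^ j) ^ e = 1 := by rw [← pow_mul, mul_comm, pow_mul, hα1, one_pow]
  have hC1 : C ^ r = 1 := hC ▸ pow_orderOf_eq_one C
  have hcomm : Commute h₁ h₂ := hh₁ ▸ hh₂ ▸ commute_fromBlocks_one_fromBlocks_neg_one C α
  have hscalar : (h₁ * h₂) ^ r = α ^ r • 1 := by
    rw [hh₁, hh₂, fromBlocks_one_mul_fromBlocks_neg_one, smul_pow, fromBlocks_diagonal_pow,
      hC1, fromBlocks_one]
  have hTle : closure {h₁, h₂ ^ e} ≤ blockUpperTriangularSubmonoid (powers C) := by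
    rw [hh₁, hh₂]
    exact closure_pair_le_blockUpperTriangularSubmonoid (by rw [smul_pow, hα1, one_pow, one_smul])
      _ _ _ _
  refine ⟨eq_bot_iff.mpr ?_, fun g hg => ?_⟩
  · rintro x ⟨hxN, hxT⟩
    obtain ⟨i, rfl⟩ := (mem_powers_iff _ _).mp hxN
    rw [hscalar, smul_pow, one_pow] at hxT ⊢
    rw [mem_bot, eq_one_of_smul_one_mem_blockUpperTriangularSubmonoid (hC ▸ hcop)
      (by rw [pow_right_comm, hαe, one_pow]) (hTle hxT), one_smul]
  · have hfin : IsOfFinOrder (h₁ * h₂) := isOfFinOrder_iff_pow_eq_one.mpr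
      ⟨r * e, hre, by rw [pow_mul, hscalar, smul_pow, one_pow, hαe, one_smul]⟩
    obtain ⟨hu₁, hu₂⟩ := hcomm.isUnit_mul_iff.mp hfin.isUnit
    obtain ⟨a, ha, b, hb, hab⟩ := hcomm.closure_pair_subset_powers_mul_closure hu₁.isOfFinOrder
      hu₂.isOfFinOrder hcop (Nat.pos_of_mul_pos_right hre)
      (fun z => hscalar ▸ (Commute.one_left z).smul_left _) hg
    exact ⟨a, ha, b, hb, hab.symm⟩

theorem H_eq_N_mul_T (q k t r : ℕ) (hq : 2 ≤ q) (hk : 1 ≤ k) (ht : 1 ≤ t)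
    (hr : r = (q ^ (k * t) - 1) / (q ^ k - 1))
    (hcop : Nat.Coprime r (q ^ k - 1)) (hrr : r * (q ^ k - 1) = q ^ (k * t) - 1)
    (F : Type*) [Field F] [Fintype F] (hF : Fintype.card F = q ^ k)
    (α : F) (hα : orderOf α = q ^ k - 1)
    (C : Matrix (Fin t) (Fin t) F) (hC : orderOf C = r)
    (hfield : ∀ A ∈ Algebra.adjoin F {C}, A = 0 ∨ IsUnit A)
    (h₁ h₂ : Matrix (Fin t ⊕ Fin t) (Fin t ⊕ Fin t) F)
    (hh₁ : h₁ = Matrix.fromBlocks C 1 0 (α • 1))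
    (hh₂ : h₂ = Matrix.fromBlocks (α • 1) (-1) 0 C)
    (N T : Submonoid (Matrix (Fin t ⊕ Fin t) (Fin t ⊕ Fin t) F))
    (hN : N = Submonoid.powers ((h₁ * h₂) ^ r))
    (hT : T = Submonoid.closure {h₁, h₂ ^ (q ^ k - 1)}) :
    (N ⊓ T = ⊥) ∧
    (∀ g ∈ Submonoid.closure {h₁, h₂}, ∃ n ∈ N, ∃ t ∈ T, g = n * t) :=
  H_eq_N_mul_T_general q k t r hq hk ht hcop hrr F α hα C hC h₁ h₂ hh₁ hh₂ N T hN hT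
end

section
/- Let H be the abelian group ⟨h₁, h₂⟩ ≤ GL_{2t}(F_{q^k}) defined above, acting on the right on lines of F_{q^k}^{2t}. For each i ∈ {1, …, t}, the stabilizer in H of the line spanned by the canonical basis vector e_i equals ⟨α I_{2t}⟩ = ⟨(h₁h₂)^r⟩, a group of order q^k − 1. -/
/-!
Every element of `⟨h₁, h₂⟩` is block upper triangular `[[P, X], [0, Q]]` with `P, X, Q` in the
field `F[C]` and `(C - α) X = P - Q`, because both generators are and this shape is closed under
products. If such a matrix fixes the line through `e_i`, its `i`-th row is `c e_i`, so `P - c` and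
`X` are elements of `F[C]` with a zero row, hence zero; then `P = Q = c` (this replaces the
paper's `D_{a,b} = 0 ↔ a = b`) and the matrix is the scalar `c = αⁿ`. Conversely `(h₁ h₂)^r = α^r`, and `α^r` generates `⟨α⟩` since `r` is prime to
`q^k - 1`.
-/

open Matrix Submonoid
open scoped IsMulCommutative

lemma Matrix.not_isUnit_of_row_eq_zero {n R : Type*} [Fintype n] [DecidableEq n] [CommRing R]
    [Nontrivial R] {A : Matrix n n R} (i : n) (h : A i = 0) : ¬IsUnit A := by
  rw [isUnit_iff_isUnit_det, det_eq_zero_of_row_eq_zero i (fun j => congrFun h j)]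
  exact not_isUnit_zero

lemma Matrix.orderOf_smul_one {n R : Type*} [Fintype n] [DecidableEq n] [Nonempty n]
    [CommRing R] (a : R) : orderOf (a • (1 : Matrix n n R)) = orderOf a := by
  rw [smul_one_eq_diagonal, ← scalar_apply]
  exact orderOf_injective (scalar n).toMonoidHom (fun _ _ => scalar_inj.1) a

lemma Submonoid.powers_pow_eq_of_coprime {M : Type*} [Monoid M] {x : M} {n : ℕ}
    (h : n.Coprime (orderOf x)) : powers (x ^ n) = powers x := by
  obtain ⟨k, hk⟩ := exists_pow_eq_self_of_coprime h
  exact le_antisymm (powers_le.2 (pow_mem (mem_powers x) n)) (powers_le.2 ⟨k, hk⟩)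

lemma IsOfFinOrder.natCard_powers {M : Type*} [Monoid M] {x : M} (hx : IsOfFinOrder x) :
    Nat.card (powers x) = orderOf x := by
  rw [← Nat.card_congr (finEquivPowers hx), Nat.card_fin]

lemma FiniteField.mem_powers_iff_ne_zero_of_orderOf_eq_card_sub_one {F : Type*} [Field F]
    [Fintype F] {α : F} (hα : orderOf α = Fintype.card F - 1) (c : F) :
    c ∈ powers α ↔ c ≠ 0 := by
  have hpos : 0 < orderOf α := by have := Fintype.one_lt_card (α := F); omega
  let u : Fˣ := (isOfFinOrder_iff_pow_eq_one.2 ⟨_, hpos, pow_orderOf_eq_one α⟩).unit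
  have hu : orderOf u = Nat.card Fˣ := by
    rw [← orderOf_units, Nat.card_units, Nat.card_eq_fintype_card]
    exact hα
  have htop : Subgroup.zpowers u = ⊤ := Subgroup.eq_top_of_card_eq _ (by rw [Nat.card_zpowers, hu])
  refine ⟨?_, fun hc => ?_⟩
  · rintro ⟨n, rfl⟩
    exact pow_ne_zero n u.ne_zero
  · obtain ⟨n, hn⟩ := mem_powers_iff_mem_zpowers.2 (htop ▸ Subgroup.mem_top (Units.mk0 c hc))
    exact ⟨n, congrArg Units.val hn⟩

section UpperBlocks

variable {m R : Type*} [Fintype m] [DecidableEq m] [CommRing R]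

def upperBlockSubmonoid (S : Subalgebra R (Matrix m m R)) [IsMulCommutative S] (N : S) :
    Submonoid (Matrix (m ⊕ m) (m ⊕ m) R) where
  carrier := {M | ∃ P X Q : S, M = fromBlocks P X 0 Q ∧ N * X = P - Q}
  one_mem' := ⟨1, 0, 1, by simp [fromBlocks_one], by simp⟩
  mul_mem' := by
    rintro _ _ ⟨P, X, Q, rfl, h⟩ ⟨P', X', Q', rfl, h'⟩
    exact ⟨P * P', P * X' + X * Q', Q * Q', by simp [fromBlocks_multiply],
      by linear_combination P * h' + Q' * h⟩

lemma closure_le_upperBlockSubmonoid (C : Matrix m m R) (α : R) :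
    closure {fromBlocks C 1 0 (α • 1), fromBlocks (α • 1) (-1) 0 C} ≤
      upperBlockSubmonoid (Algebra.adjoin R {C})
        ⟨C - α • 1, sub_mem (Algebra.self_mem_adjoin_singleton R C)
          (Subalgebra.smul_mem _ (one_mem _) α)⟩ := by
  have hC := Algebra.self_mem_adjoin_singleton R C
  refine closure_le.2 (Set.insert_subset_iff.2 ⟨?_, Set.singleton_subset_iff.2 ?_⟩)
  · exact ⟨⟨C, hC⟩, 1, α • 1, by simp, by ext1; simp⟩
  · exact ⟨α • 1, -1, ⟨C, hC⟩, by simp, by ext1; simp⟩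

lemma eq_smul_one_of_mem_upperBlockSubmonoid [Nontrivial R] {S : Subalgebra R (Matrix m m R)}
    [IsMulCommutative S] {N : S} (hS : ∀ A ∈ S, A = 0 ∨ IsUnit A) {M : Matrix (m ⊕ m) (m ⊕ m) R}
    (hM : M ∈ upperBlockSubmonoid S N) {i : m} {c : R}
    (hrow : M (Sum.inl i) = c • Pi.single (Sum.inl i) 1) : M = c • 1 := by
  obtain ⟨P, X, Q, rfl, hNX⟩ := hM
  have hrow_zero : ∀ A ∈ S, A i = 0 → A = 0 := fun A hA h =>
    (hS A hA).resolve_right (not_isUnit_of_row_eq_zero i h)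
  have hP : (P : Matrix m m R) = c • 1 := by
    refine sub_eq_zero.1 (hrow_zero _ (sub_mem P.2 (S.smul_mem S.one_mem c)) ?_)
    ext j
    have := congrFun hrow (Sum.inl j)
    simp only [fromBlocks_apply₁₁, Pi.smul_apply, Pi.single_apply, Sum.inl.injEq] at this
    simp [this, one_apply, eq_comm]
  have hX : X = 0 := Subtype.ext <| hrow_zero _ X.2 <| by
    ext j
    simpa using congrFun hrow (Sum.inr j)
  have hQ : Q = P := by
    rw [hX, mul_zero, eq_comm, sub_eq_zero] at hNX
    exact hNX.symm
  rw [hQ, hX, hP, ← fromBlocks_one, fromBlocks_smul]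
  simp

end UpperBlocks

lemma setOf_span_vecMul_single_eq_eq_powers {m F : Type*} [Fintype m] [DecidableEq m] [Field F]
    {S : Subalgebra F (Matrix m m F)} [IsMulCommutative S] {N : S}
    (hS : ∀ A ∈ S, A = 0 ∨ IsUnit A) {G : Submonoid (Matrix (m ⊕ m) (m ⊕ m) F)}
    (hG : G ≤ upperBlockSubmonoid S N) {α : F} (hα : ∀ c : F, c ∈ powers α ↔ c ≠ 0)
    (hαG : α • 1 ∈ G) (i : m) :
    {A | A ∈ G ∧ Submodule.span F {Pi.single (Sum.inl i) (1 : F) ᵥ* A}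
        = Submodule.span F {Pi.single (Sum.inl i) (1 : F)}} =
      (powers (α • (1 : Matrix (m ⊕ m) (m ⊕ m) F)) : Set _) := by
  ext A
  simp only [Set.mem_ofPred_eq, SetLike.mem_coe, single_one_vecMul, mem_powers_iff]
  constructor
  · rintro ⟨hA, hspan⟩
    obtain ⟨z, hz⟩ := Submodule.span_singleton_eq_span_singleton.1 hspan
    have hrow : A (Sum.inl i) = (↑z⁻¹ : F) • Pi.single (Sum.inl i) 1 := by
      rw [← Units.smul_def]
      exact eq_inv_smul_iff.2 hz
    obtain ⟨n, hn⟩ := (hα _).2 z⁻¹.ne_zero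
    refine ⟨n, ?_⟩
    rw [eq_smul_one_of_mem_upperBlockSubmonoid hS (hG hA) hrow, ← hn, smul_pow, one_pow]
  · rintro ⟨n, rfl⟩
    refine ⟨pow_mem hαG n, ?_⟩
    have hrow : (α ^ n • (1 : Matrix (m ⊕ m) (m ⊕ m) F)).row (Sum.inl i)
        = α ^ n • Pi.single (Sum.inl i) 1 := by
      ext j
      simp [one_apply, Pi.single_apply, eq_comm]
    rw [smul_pow, one_pow, hrow]
    exact Submodule.span_singleton_smul_eq (((hα α).1 (mem_powers α)).isUnit.pow n) _

theorem stabilizer_of_line_general (q k t r : ℕ)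
    (hcop : Nat.Coprime r (q ^ k - 1))
    (F : Type*) [Field F] [Fintype F] (hF : Fintype.card F = q ^ k)
    (α : F) (hα : orderOf α = q ^ k - 1)
    (C : Matrix (Fin t) (Fin t) F) (hC : orderOf C = r)
    (hfield : ∀ A ∈ Algebra.adjoin F {C}, A = 0 ∨ IsUnit A)
    (h₁ h₂ : Matrix (Fin t ⊕ Fin t) (Fin t ⊕ Fin t) F)
    (hh₁ : h₁ = Matrix.fromBlocks C 1 0 (α • 1))
    (hh₂ : h₂ = Matrix.fromBlocks (α • 1) (-1) 0 C)
    (i : Fin t) :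
    ({A | A ∈ Submonoid.closure {h₁, h₂} ∧
        Submodule.span F {Matrix.vecMul (Pi.single (Sum.inl i) (1 : F)) A}
          = Submodule.span F {Pi.single (Sum.inl i) (1 : F)}}
      = (Submonoid.powers ((h₁ * h₂) ^ r) : Set (Matrix (Fin t ⊕ Fin t) (Fin t ⊕ Fin t) F))) ∧
    (Submonoid.powers ((h₁ * h₂) ^ r)
      = Submonoid.powers (α • (1 : Matrix (Fin t ⊕ Fin t) (Fin t ⊕ Fin t) F))) ∧
    (Nat.card (Submonoid.powers ((h₁ * h₂) ^ r)) = q ^ k - 1) := by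
  have : Nonempty (Fin t) := ⟨i⟩
  have hpow : (h₁ * h₂) ^ r = (α • 1) ^ r := by
    rw [hh₁, hh₂, fromBlocks_multiply, ← hC]
    simp [fromBlocks_diagonal_pow, smul_pow, ← fromBlocks_one, fromBlocks_smul]
  have hord : orderOf (α • 1 : Matrix (Fin t ⊕ Fin t) (Fin t ⊕ Fin t) F) = q ^ k - 1 := by
    rw [orderOf_smul_one, hα]
  have hpowers : powers ((h₁ * h₂) ^ r) = powers (α • 1) := by
    rw [hpow]
    exact powers_pow_eq_of_coprime (hord ▸ hcop)
  have hαG : α • 1 ∈ closure {h₁, h₂} := by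
    have hprod : h₁ * h₂ ∈ closure {h₁, h₂} :=
      mul_mem (subset_closure (by simp)) (subset_closure (by simp))
    exact powers_le.2 (pow_mem hprod r) (by rw [hpowers]; exact mem_powers _)
  have hfin : IsOfFinOrder (α • 1 : Matrix (Fin t ⊕ Fin t) (Fin t ⊕ Fin t) F) := by
    have := Fintype.one_lt_card (α := F)
    exact orderOf_pos_iff.1 (by omega)
  refine ⟨?_, hpowers, by rw [hpowers, hfin.natCard_powers, hord]⟩
  rw [hpowers]
  have hgen := FiniteField.mem_powers_iff_ne_zero_of_orderOf_eq_card_sub_one (hF ▸ hα)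
  have hG := closure_le_upperBlockSubmonoid C α
  rw [← hh₁, ← hh₂] at hG
  exact setOf_span_vecMul_single_eq_eq_powers hfield hG hgen hαG i

theorem stabilizer_of_line (q k t r : ℕ) (hq : 2 ≤ q) (hk : 1 ≤ k) (ht : 1 ≤ t)
    (hr : r = (q ^ (k * t) - 1) / (q ^ k - 1))
    (hcop : Nat.Coprime r (q ^ k - 1)) (hrr : r * (q ^ k - 1) = q ^ (k * t) - 1)
    (F : Type*) [Field F] [Fintype F] (hF : Fintype.card F = q ^ k)
    (α : F) (hα : orderOf α = q ^ k - 1)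
    (C : Matrix (Fin t) (Fin t) F) (hC : orderOf C = r)
    (hfield : ∀ A ∈ Algebra.adjoin F {C}, A = 0 ∨ IsUnit A)
    (h₁ h₂ : Matrix (Fin t ⊕ Fin t) (Fin t ⊕ Fin t) F)
    (hh₁ : h₁ = Matrix.fromBlocks C 1 0 (α • 1))
    (hh₂ : h₂ = Matrix.fromBlocks (α • 1) (-1) 0 C)
    (i : Fin t) :
    ({A | A ∈ Submonoid.closure {h₁, h₂} ∧
        Submodule.span F {Matrix.vecMul (Pi.single (Sum.inl i) (1 : F)) A}
          = Submodule.span F {Pi.single (Sum.inl i) (1 : F)}}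
      = (Submonoid.powers ((h₁ * h₂) ^ r) : Set (Matrix (Fin t ⊕ Fin t) (Fin t ⊕ Fin t) F))) ∧
    (Submonoid.powers ((h₁ * h₂) ^ r)
      = Submonoid.powers (α • (1 : Matrix (Fin t ⊕ Fin t) (Fin t ⊕ Fin t) F))) ∧
    (Nat.card (Submonoid.powers ((h₁ * h₂) ^ r)) = q ^ k - 1) :=
  stabilizer_of_line_general q k t r hcop F hF α hα C hC hfield h₁ h₂ hh₁ hh₂ i
end

section
/- Let F be a finite field, K = F[M] a matrix field (every nonzero element of K ⊆ F^{t×t} is invertible), and let P = (X | Y) and Q = (X' | Y') be t×2t matrices with blocks X, Y, X', Y' ∈ K. Then P ≠ Q if and only if the i-th rows of P and Q differ, for any fixed i ∈ {1, …, t}. -/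
/-!
In a subring `K` of square matrices whose nonzero elements are all invertible, an element is
determined by any one of its rows: if `A, B ∈ K` agree in row `i`, then `A - B ∈ K` has a zero
row, so it is not invertible and must vanish. Applying this to both blocks of `(X | Y)` and
`(X' | Y')` shows that these matrices are equal as soon as their `i`-th rows are.
-/

namespace Matrix

theorem row_ne_zero_of_isUnit {n R : Type*} [Fintype n] [DecidableEq n] [Semiring R]
    [Nontrivial R] {A : Matrix n n R} (hA : IsUnit A) (i : n) : A i ≠ 0 := by
  intro hrow
  obtain ⟨B, hB⟩ := hA.exists_right_inv
  have hdiag : (A * B) i i = 0 := by simp [mul_apply, hrow]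
  simp [hB] at hdiag

theorem fromCols_row_eq_iff {m n₁ n₂ R : Type*} (A₁ B₁ : Matrix m n₁ R)
    (A₂ B₂ : Matrix m n₂ R) (i : m) :
    fromCols A₁ A₂ i = fromCols B₁ B₂ i ↔ A₁ i = B₁ i ∧ A₂ i = B₂ i := by
  simp only [funext_iff, Sum.forall, fromCols_apply_inl, fromCols_apply_inr]

theorem eq_of_row_eq_of_mem {n R : Type*} [Fintype n] [DecidableEq n] [Ring R] [Nontrivial R]
    {K : Subring (Matrix n n R)} (hK : ∀ A ∈ K, A ≠ 0 → IsUnit A)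
    {A B : Matrix n n R} (hA : A ∈ K) (hB : B ∈ K) (i : n) (h : A i = B i) : A = B := by
  by_contra hne
  have hunit := hK (A - B) (sub_mem hA hB) (sub_ne_zero.mpr hne)
  exact row_ne_zero_of_isUnit hunit i (sub_eq_zero.mpr h)

end Matrix

theorem row_rigidity (F : Type*) [Field F] (t : ℕ)
    (K : Subring (Matrix (Fin t) (Fin t) F))
    (hK : ∀ A ∈ K, A ≠ 0 → IsUnit A)
    (X Y X' Y' : Matrix (Fin t) (Fin t) F)
    (hX : X ∈ K) (hY : Y ∈ K) (hX' : X' ∈ K) (hY' : Y' ∈ K)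
    (i : Fin t) :
    Matrix.fromCols X Y ≠ Matrix.fromCols X' Y' ↔
      (fun j => Matrix.fromCols X Y i j) ≠ (fun j => Matrix.fromCols X' Y' i j) := by
  refine not_congr ⟨fun h => congrFun h i, fun hrow => ?_⟩
  obtain ⟨hXrow, hYrow⟩ := (Matrix.fromCols_row_eq_iff X X' Y Y' i).mp hrow
  rw [Matrix.eq_of_row_eq_of_mem hK hX hX' i hXrow, Matrix.eq_of_row_eq_of_mem hK hY hY' i hYrow]
end
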